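/- arXiv:1509.02955 — 3 statements merged into one kernel-verified Lean document; each statement's English description precedes it below -/
import Mathlib

section
/- In a historyless interaction system with self-independent reaction functions, if two committed states differ in only one node's action, then they are committed to the same stable state. -/
variable {n : ℕ} {A : Fin n → Type*}

/-- One step of historyless dynamics: nodes in the activation set `s` react,
the others keep their actions. -/
def step (f : ∀ i, (∀ j, A j) → A i) (s : Finset (Fin n)) (a : ∀ j, A j) : ∀ j, A j :=
  fun i => if i ∈ s then f i a else a i

/-- The `(a0, σ)`-trajectory of the historyless system. -/
def traj (f : ∀ i, (∀ j, A j) → A i) (σ : ℕ → Finset (Fin n)) (a0 : ∀ j, A j) :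
    ℕ → ∀ j, A j
  | 0 => a0
  | t + 1 => step f (σ (t + 1)) (traj f σ a0 t)

/-- A schedule is fair if it activates every node infinitely often. -/
def Fair (σ : ℕ → Finset (Fin n)) : Prop := ∀ i : Fin n, ∀ T : ℕ, ∃ t ≥ T, i ∈ σ t

/-- A sequence of states converges to `b` if it is eventually constantly `b`. -/
def Converges (x : ℕ → ∀ j, A j) (b : ∀ j, A j) : Prop := ∃ T : ℕ, ∀ t > T, x t = b

/-- A state `a` is committed to `b` if every fair trajectory from `a` converges to `b`. -/
def Committed (f : ∀ i, (∀ j, A j) → A i) (a b : ∀ j, A j) : Prop :=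
  ∀ σ : ℕ → Finset (Fin n), Fair σ → Converges (traj f σ a) b

/-- Reaction functions are self-independent if each `f i` ignores node `i`'s own action. -/
def SelfIndep (f : ∀ i, (∀ j, A j) → A i) : Prop :=
  ∀ (i : Fin n) (a a' : ∀ j, A j), (∀ j, j ≠ i → a j = a' j) → f i a = f i a'

/-! Activate node `i` alone first. By self-independence its reaction is the same from `a` and
from `a'`, so after this one step both states coincide, and from then on the two trajectories of
the schedule (which activates everyone at every later time, hence is fair) are identical.
Their limits `b` and `b'` are therefore equal. -/

variable {f : ∀ i, (∀ j, A j) → A i}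

theorem step_singleton_eq_of_eq_off (hsi : SelfIndep f) {a a' : ∀ j, A j} {i : Fin n}
    (h : ∀ j, j ≠ i → a j = a' j) : step f {i} a = step f {i} a' := by
  funext j
  by_cases hj : j = i
  · subst hj
    simp [step, hsi j a a' h]
  · simp [step, hj, h j hj]

theorem traj_eq_of_le {σ : ℕ → Finset (Fin n)} {a a' : ∀ j, A j} {t₀ t : ℕ}
    (h₀ : traj f σ a t₀ = traj f σ a' t₀) (ht : t₀ ≤ t) : traj f σ a t = traj f σ a' t := by
  induction t, ht using Nat.le_induction with
  | base => exact h₀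
  | succ t _ ih => simp only [traj, ih]

theorem Committed.eq_of_traj_eq {σ : ℕ → Finset (Fin n)} {a a' b b' : ∀ j, A j} {t₀ : ℕ}
    (hc : Committed f a b) (hc' : Committed f a' b') (hσ : Fair σ)
    (h₀ : traj f σ a t₀ = traj f σ a' t₀) : b = b' := by
  obtain ⟨T, hT⟩ := hc σ hσ
  obtain ⟨T', hT'⟩ := hc' σ hσ
  set t := max t₀ (max T T') + 1
  calc b = traj f σ a t := (hT t (by omega)).symm
    _ = traj f σ a' t := traj_eq_of_le h₀ (by omega)
    _ = b' := hT' t (by omega)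

/-- Time `0` is never used by `traj`, so the first activation happens at time `1`. -/
def singleThenAll (i : Fin n) (t : ℕ) : Finset (Fin n) :=
  if t = 1 then {i} else Finset.univ

theorem fair_singleThenAll (i : Fin n) : Fair (singleThenAll i) := fun j T =>
  ⟨max T 2, le_max_left _ _, by simp [singleThenAll, show max T 2 ≠ 1 by omega]⟩

theorem stmt0_general (n : ℕ) (A : Fin n → Type*)
    (f : ∀ i, (∀ j, A j) → A i) (hsi : SelfIndep f)
    (a a' b b' : ∀ j, A j) (i : Fin n)
    (hdiff : ∀ j, j ≠ i → a j = a' j)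
    (hc : Committed f a b) (hc' : Committed f a' b') :
    b = b' := by
  have h₁ : traj f (singleThenAll i) a 1 = traj f (singleThenAll i) a' 1 := by
    simpa [traj, singleThenAll] using step_singleton_eq_of_eq_off hsi hdiff
  exact hc.eq_of_traj_eq hc' (fair_singleThenAll i) h₁

/-- In a historyless interaction system with self-independent reaction functions,
if two committed states differ in only one node's action, then
they are committed to the same stable state. -/
theorem stmt0 (n : ℕ) (A : Fin n → Type*) [∀ i, Fintype (A i)]
    (f : ∀ i, (∀ j, A j) → A i) (hsi : SelfIndep f)
    (a a' b b' : ∀ j, A j) (i : Fin n)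
    (hdiff : ∀ j, j ≠ i → a j = a' j)
    (hc : Committed f a b) (hc' : Committed f a' b') :
    b = b' :=
  stmt0_general n A f hsi a a' b b' i hdiff hc hc'
end

section
/- Every convergent historyless interaction system with self-independent reaction functions and more than one stable state has at least one uncommitted state. -/
variable {n : ℕ} {A : Fin n → Type*}

/-- A stable state is a fixed point of `f`. -/
def Stable (f : ∀ i, (∀ j, A j) → A i) (a : ∀ j, A j) : Prop := ∀ i, f i a = a i

/-- The system is convergent if every fair trajectory converges. -/
def Convergent (f : ∀ i, (∀ j, A j) → A i) : Prop :=
  ∀ (a : ∀ j, A j) (σ : ℕ → Finset (Fin n)), Fair σ → ∃ b, Converges (traj f σ a) b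

/-!
Under self-independence, activating node `i` alone maps two states that differ only at `i`
to the same state, so they share every continuation; hence if both are committed, they are
committed to the same state. If every state were committed, walking from one stable state to
another by changing one coordinate at a time would force the two stable states, each
committed to itself, to coincide.
-/

theorem traj_succ (f : ∀ i, (∀ j, A j) → A i) (σ : ℕ → Finset (Fin n)) (a : ∀ j, A j)
    (t : ℕ) : traj f σ a (t + 1) = step f (σ (t + 1)) (traj f σ a t) :=
  rfl

theorem Converges.unique {x : ℕ → ∀ j, A j} {c c' : ∀ j, A j}
    (h : Converges x c) (h' : Converges x c') : c = c' := by
  obtain ⟨T, hT⟩ := h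
  obtain ⟨T', hT'⟩ := h'
  exact (hT (T + T' + 1) (by omega)).symm.trans (hT' (T + T' + 1) (by omega))

theorem fair_const_univ : Fair (fun _ : ℕ => (Finset.univ : Finset (Fin n))) :=
  fun i T => ⟨T, le_rfl, Finset.mem_univ i⟩

def singletonThenUniv (i : Fin n) : ℕ → Finset (Fin n) :=
  fun t => if t = 1 then {i} else Finset.univ

theorem fair_singletonThenUniv (i : Fin n) : Fair (singletonThenUniv i) := fun j T =>
  ⟨T + 2, by omega, by simp [singletonThenUniv]⟩

theorem Committed.unique {f : ∀ i, (∀ j, A j) → A i} {a c c' : ∀ j, A j}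
    (h : Committed f a c) (h' : Committed f a c') : c = c' :=
  (h _ fair_const_univ).unique (h' _ fair_const_univ)

theorem Stable.traj_eq {f : ∀ i, (∀ j, A j) → A i} {d : ∀ j, A j} (hd : Stable f d)
    (σ : ℕ → Finset (Fin n)) (t : ℕ) : traj f σ d t = d := by
  induction t with
  | zero => rfl
  | succ t ih =>
    rw [traj_succ, ih]
    funext j
    by_cases hj : j ∈ σ (t + 1) <;> simp [step, hj, hd j]

theorem Stable.committed {f : ∀ i, (∀ j, A j) → A i} {d : ∀ j, A j} (hd : Stable f d) :
    Committed f d d :=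
  fun σ _ => ⟨0, fun t _ => hd.traj_eq σ t⟩

theorem traj_succ_eq_of_step_eq {f : ∀ i, (∀ j, A j) → A i} {σ : ℕ → Finset (Fin n)}
    {a a' : ∀ j, A j} (h : step f (σ 1) a = step f (σ 1) a') (t : ℕ) :
    traj f σ a (t + 1) = traj f σ a' (t + 1) := by
  induction t with
  | zero => exact h
  | succ t ih => rw [traj_succ, ih, ← traj_succ]

theorem SelfIndep.step_singleton_eq {f : ∀ i, (∀ j, A j) → A i} (hsi : SelfIndep f)
    {i : Fin n} {a a' : ∀ j, A j} (h : ∀ j, j ≠ i → a j = a' j) :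
    step f {i} a = step f {i} a' := by
  funext j
  by_cases hj : j = i
  · subst hj
    simpa [step] using hsi j a a' h
  · simpa [step, hj] using h j hj

theorem SelfIndep.committed_eq_of_eq_off {f : ∀ i, (∀ j, A j) → A i} (hsi : SelfIndep f)
    {i : Fin n} {a a' c c' : ∀ j, A j} (hoff : ∀ j, j ≠ i → a j = a' j)
    (h : Committed f a c) (h' : Committed f a' c') : c = c' := by
  have hstep : step f (singletonThenUniv i 1) a = step f (singletonThenUniv i 1) a' := by
    simpa [singletonThenUniv] using hsi.step_singleton_eq hoff
  obtain ⟨T, hT⟩ := h _ (fair_singletonThenUniv i)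
  obtain ⟨T', hT'⟩ := h' _ (fair_singletonThenUniv i)
  calc c = traj f (singletonThenUniv i) a (T + T' + 1) := (hT _ (by omega)).symm
    _ = traj f (singletonThenUniv i) a' (T + T' + 1) := traj_succ_eq_of_step_eq hstep _
    _ = c' := hT' _ (by omega)

def hybrid (b b' : ∀ j, A j) (k : ℕ) : ∀ j, A j :=
  fun j => if (j : ℕ) < k then b' j else b j

theorem hybrid_zero (b b' : ∀ j, A j) : hybrid b b' 0 = b := by
  funext j
  simp [hybrid]

theorem hybrid_self (b b' : ∀ j, A j) : hybrid b b' n = b' := by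
  funext j
  simp [hybrid]

theorem hybrid_succ_eq_off (b b' : ∀ j, A j) (k : Fin n) :
    ∀ j, j ≠ k → hybrid b b' k j = hybrid b b' (k + 1) j := by
  intro j hj
  have hjk : (j : ℕ) ≠ k := Fin.val_ne_of_ne hj
  by_cases hlt : (j : ℕ) < k
  · simp [hybrid, hlt, Nat.lt_succ_of_lt hlt]
  · simp [hybrid, hlt, show ¬ (j : ℕ) < k + 1 by omega]

theorem SelfIndep.commitment_eq {f : ∀ i, (∀ j, A j) → A i} (hsi : SelfIndep f)
    {c : (∀ j, A j) → ∀ j, A j} (hc : ∀ a, Committed f a (c a)) (b b' : ∀ j, A j) :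
    c b = c b' := by
  have hchain : ∀ k ≤ n, c b = c (hybrid b b' k) := by
    intro k hk
    induction k with
    | zero => rw [hybrid_zero]
    | succ k ih =>
      exact (ih (by omega)).trans <| hsi.committed_eq_of_eq_off
        (hybrid_succ_eq_off b b' ⟨k, by omega⟩) (hc _) (hc _)
  simpa [hybrid_self] using hchain n le_rfl

theorem stmt1_general (n : ℕ) (A : Fin n → Type*)
    (f : ∀ i, (∀ j, A j) → A i) (hsi : SelfIndep f)
    (b b' : ∀ j, A j) (hb : Stable f b) (hb' : Stable f b') (hne : b ≠ b') :
    ∃ a : ∀ j, A j, ∀ c : ∀ j, A j, ¬ Committed f a c := by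
  by_contra! hall
  choose c hc using hall
  apply hne
  calc b = c b := hb.committed.unique (hc b)
    _ = c b' := hsi.commitment_eq hc b b'
    _ = b' := (hc b').unique hb'.committed

/-- Every convergent historyless interaction system with self-independent reaction
functions and more than one stable state has at least one uncommitted state. -/
theorem stmt1 (n : ℕ) (A : Fin n → Type*)
    (f : ∀ i, (∀ j, A j) → A i) (hconv : Convergent f) (hsi : SelfIndep f)
    (b b' : ∀ j, A j) (hb : Stable f b) (hb' : Stable f b') (hne : b ≠ b') :
    ∃ a : ∀ j, A j, ∀ c : ∀ j, A j, ¬ Committed f a c :=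
  stmt1_general n A f hsi b b' hb hb' hne
end

section
/- There is a stationary 3-recall deterministic uncoupled protocol that is self-stabilizing on all finite games with at least one pure Nash equilibrium: specifically, fix a cyclic permutation π of the state space A, and let each node i play, given the last three states (a,b,c): c_i if b = c and c_i is a best response of i to c; min BR_i(c) if b = c and c_i is not a best response; π_i(a) if a = b ≠ c; and c_i otherwise. Then under the synchronous schedule (all nodes activated each step), from every initial triple of states, the resulting trajectory eventually remains forever at a pure Nash equilibrium. -/
/-! When a state `c` is repeated, every node answers with its least best response (or keeps
its action if that is already a best response), so the next state `F c` does not depend on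
the older history; `F c = c` exactly when `c` is a PNE, and then the trajectory is frozen.
Otherwise the pattern `c, c, F c` with `F c ≠ c` makes every node play `π c`, and after at
most one holding step `π c` is repeated. So the repeated states walk along the `π`-orbit
until they meet a PNE, and since `π` is a single cycle they meet one. -/

variable {n : ℕ} {A : Fin n → Type*}

/-- `α` is a best response of node `i` at state `c`. -/
def IsBR (u : ∀ i : Fin n, (∀ j, A j) → ℝ) (i : Fin n) (α : A i) (c : ∀ j, A j) : Prop :=
  ∀ β : A i, u i (Function.update c i β) ≤ u i (Function.update c i α)

/-- A pure Nash equilibrium: every node's action is a best response. -/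
def PNE (u : ∀ i : Fin n, (∀ j, A j) → ℝ) (s : ∀ j, A j) : Prop :=
  ∀ i : Fin n, IsBR u i (s i) s

section ThreeRecall

variable {S : Type*}

/-- `step a b c` is the joint move after the states `a, b, c`; `F` is the joint response to a
repeated state and `π` the scanning order. -/
structure IsScanProtocol (step : S → S → S → S) (F π : S → S) : Prop where
  step_repeat : ∀ a c, step a c c = F c
  step_advance : ∀ b c, b ≠ c → step b b c = π b
  step_hold : ∀ a b c, a ≠ b → b ≠ c → step a b c = c

namespace IsScanProtocol

variable {step : S → S → S → S} {F π : S → S} {x : ℕ → S}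

theorem x_add_three_of_repeat (hP : IsScanProtocol step F π)
    (hx : ∀ t, x (t + 3) = step (x t) (x (t + 1)) (x (t + 2))) {t : ℕ} {c : S}
    (h₁ : x (t + 1) = c) (h₂ : x (t + 2) = c) : x (t + 3) = F c := by
  rw [hx, h₁, h₂, hP.step_repeat]

theorem x_add_three_of_advance (hP : IsScanProtocol step F π)
    (hx : ∀ t, x (t + 3) = step (x t) (x (t + 1)) (x (t + 2))) {t : ℕ}
    (h₀₁ : x t = x (t + 1)) (h₁₂ : x (t + 1) ≠ x (t + 2)) : x (t + 3) = π (x t) := by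
  rw [hx, h₀₁, hP.step_advance _ _ h₁₂]

theorem x_add_three_of_hold (hP : IsScanProtocol step F π)
    (hx : ∀ t, x (t + 3) = step (x t) (x (t + 1)) (x (t + 2))) {t : ℕ}
    (h₀₁ : x t ≠ x (t + 1)) (h₁₂ : x (t + 1) ≠ x (t + 2)) : x (t + 3) = x (t + 2) := by
  rw [hx, hP.step_hold _ _ _ h₀₁ h₁₂]

theorem exists_repeat (hP : IsScanProtocol step F π)
    (hx : ∀ t, x (t + 3) = step (x t) (x (t + 1)) (x (t + 2))) :
    ∃ t, x (t + 1) = x (t + 2) := by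
  by_cases h₁₂ : x 1 = x 2
  · exact ⟨0, h₁₂⟩
  by_cases h₂₃ : x 2 = x 3
  · exact ⟨1, h₂₃⟩
  exact ⟨2, (hP.x_add_three_of_hold hx h₁₂ h₂₃).symm⟩

theorem eq_of_repeat_of_isFixedPt (hP : IsScanProtocol step F π)
    (hx : ∀ t, x (t + 3) = step (x t) (x (t + 1)) (x (t + 2))) {t : ℕ} {c : S}
    (h₁ : x (t + 1) = c) (h₂ : x (t + 2) = c) (hc : Function.IsFixedPt F c) :
    ∀ s ≥ t + 1, x s = c := by
  have hrepeat : ∀ s ≥ t, x (s + 1) = c ∧ x (s + 2) = c := by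
    refine Nat.le_induction ⟨h₁, h₂⟩ fun s _ ih => ⟨ih.2, ?_⟩
    exact (hP.x_add_three_of_repeat hx ih.1 ih.2).trans hc
  intro s hs
  obtain ⟨s, rfl⟩ : ∃ s', s = s' + 1 := ⟨s - 1, by omega⟩
  exact (hrepeat s (by omega)).1

theorem exists_repeat_perm_of_repeat (hP : IsScanProtocol step F π)
    (hx : ∀ t, x (t + 3) = step (x t) (x (t + 1)) (x (t + 2))) {t : ℕ} {c : S}
    (h₁ : x (t + 1) = c) (h₂ : x (t + 2) = c) (hc : ¬ Function.IsFixedPt F c) :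
    ∃ s, x (s + 1) = π c ∧ x (s + 2) = π c := by
  have h₃ : x (t + 3) = F c := hP.x_add_three_of_repeat hx h₁ h₂
  have h₄ : x (t + 4) = π c := by
    rw [← h₁]
    exact hP.x_add_three_of_advance hx (h₁.trans h₂.symm) (by rw [h₂, h₃]; exact Ne.symm hc)
  by_cases hFπ : F c = π c
  · exact ⟨t + 2, h₃.trans hFπ, h₄⟩
  have h₅ : x (t + 5) = π c :=
    (hP.x_add_three_of_hold hx (by rw [h₂, h₃]; exact Ne.symm hc)
      (by rw [h₃, h₄]; exact hFπ)).trans h₄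
  exact ⟨t + 3, h₄, h₅⟩

theorem exists_eventually_eq_isFixedPt (hP : IsScanProtocol step F π)
    (hx : ∀ t, x (t + 3) = step (x t) (x (t + 1)) (x (t + 2)))
    (hπ : ∀ a b, ∃ k, π^[k] a = b) (hfix : ∃ p, Function.IsFixedPt F p) :
    ∃ T p, Function.IsFixedPt F p ∧ ∀ t ≥ T, x t = p := by
  obtain ⟨p₀, hp₀⟩ := hfix
  suffices h : ∀ k c t, π^[k] c = p₀ → x (t + 1) = c → x (t + 2) = c →
      ∃ T p, Function.IsFixedPt F p ∧ ∀ t ≥ T, x t = p by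
    obtain ⟨t, ht⟩ := hP.exists_repeat hx
    obtain ⟨k, hk⟩ := hπ (x (t + 1)) p₀
    exact h k _ t hk rfl ht.symm
  intro k
  induction k with
  | zero =>
    rintro c t rfl h₁ h₂
    exact ⟨t + 1, c, hp₀, hP.eq_of_repeat_of_isFixedPt hx h₁ h₂ hp₀⟩
  | succ k ih =>
    intro c t hk h₁ h₂
    by_cases hc : Function.IsFixedPt F c
    · exact ⟨t + 1, c, hc, hP.eq_of_repeat_of_isFixedPt hx h₁ h₂ hc⟩
    obtain ⟨s, hs₁, hs₂⟩ := hP.exists_repeat_perm_of_repeat hx h₁ h₂ hc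
    exact ih (π c) s hk hs₁ hs₂

end IsScanProtocol

end ThreeRecall

section Game

variable [∀ i, LinearOrder (A i)] {u : Fin n → (∀ j, A j) → ℝ}
  {g : ∀ i : Fin n, (∀ j, A j) → (∀ j, A j) → (∀ j, A j) → A i}

theorem response_repeat_eq (hkeep : ∀ i a c, IsBR u i (c i) c → g i a c c = c i)
    (hleast : ∀ i a c, ¬ IsBR u i (c i) c → IsLeast {α | IsBR u i α c} (g i a c c))
    (i : Fin n) (a a' c : ∀ j, A j) : g i a c c = g i a' c c := by
  by_cases h : IsBR u i (c i) c
  · rw [hkeep i a c h, hkeep i a' c h]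
  · exact (hleast i a c h).unique (hleast i a' c h)

theorem isFixedPt_response_iff_PNE (hkeep : ∀ i a c, IsBR u i (c i) c → g i a c c = c i)
    (hleast : ∀ i a c, ¬ IsBR u i (c i) c → IsLeast {α | IsBR u i α c} (g i a c c))
    (c : ∀ j, A j) : Function.IsFixedPt (fun c i => g i c c c) c ↔ PNE u c := by
  constructor
  · intro hc i
    by_contra hi
    exact hi (congrFun hc i ▸ (hleast i c c hi).1)
  · intro hc
    funext i
    exact hkeep i c c (hc i)

end Game

theorem stmt11_general (n : ℕ) (A : Fin n → Type*)
    [∀ i, LinearOrder (A i)]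
    (u : ∀ i : Fin n, (∀ j, A j) → ℝ)
    (π : Equiv.Perm (∀ j, A j))
    (hπ : ∀ a b : ∀ j, A j, ∃ k : ℕ, (π ^ k) a = b)
    (g : ∀ i : Fin n, (∀ j, A j) → (∀ j, A j) → (∀ j, A j) → A i)
    (hg1 : ∀ (i : Fin n) (a b c : ∀ j, A j), b = c → IsBR u i (c i) c →
      g i a b c = c i)
    (hg2 : ∀ (i : Fin n) (a b c : ∀ j, A j), b = c → ¬ IsBR u i (c i) c →
      IsBR u i (g i a b c) c ∧ ∀ α : A i, IsBR u i α c → g i a b c ≤ α)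
    (hg3 : ∀ (i : Fin n) (a b c : ∀ j, A j), b ≠ c → a = b → g i a b c = π a i)
    (hg4 : ∀ (i : Fin n) (a b c : ∀ j, A j), b ≠ c → a ≠ b → g i a b c = c i)
    (hPNE : ∃ p : ∀ j, A j, PNE u p)
    (x : ℕ → ∀ j, A j)
    (hx : ∀ t : ℕ, x (t + 3) = fun i => g i (x t) (x (t + 1)) (x (t + 2))) :
    ∃ (T : ℕ) (p : ∀ j, A j), PNE u p ∧ ∀ t ≥ T, x t = p := by
  have hkeep : ∀ i a c, IsBR u i (c i) c → g i a c c = c i := fun i a c => hg1 i a c c rfl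
  have hleast : ∀ i a c, ¬ IsBR u i (c i) c → IsLeast {α | IsBR u i α c} (g i a c c) :=
    fun i a c h => ⟨(hg2 i a c c rfl h).1, fun α => (hg2 i a c c rfl h).2 α⟩
  have hP : IsScanProtocol (fun a b c i => g i a b c) (fun c i => g i c c c) π :=
    { step_repeat := fun a c => funext fun i => response_repeat_eq hkeep hleast i a c c
      step_advance := fun b c hbc => funext fun i => hg3 i b b c hbc rfl
      step_hold := fun a b c hab hbc => funext fun i => hg4 i a b c hbc hab }
  have hπ' : ∀ a b, ∃ k, (⇑π)^[k] a = b := fun a b =>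
    (hπ a b).imp fun k hk => by rwa [Equiv.Perm.coe_pow] at hk
  obtain ⟨T, p, hp, hT⟩ := hP.exists_eventually_eq_isFixedPt hx hπ'
    (hPNE.imp fun p => (isFixedPt_response_iff_PNE hkeep hleast p).2)
  exact ⟨T, p, (isFixedPt_response_iff_PNE hkeep hleast p).1 hp, hT⟩

/-- There is a stationary 3-recall deterministic uncoupled protocol that is
self-stabilizing on all finite games having a pure Nash equilibrium: fixing a cyclic
permutation `π` of the state space, each node `i` plays, given the last three states
`(a,b,c)`: `c i` if `b = c` and `c i` is a best response to `c`; the minimal best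
response to `c` if `b = c` and `c i` is not a best response; `π a i` if `a = b ≠ c`;
and `c i` otherwise.  Under the synchronous schedule, from every initial triple the
trajectory eventually remains forever at a pure Nash equilibrium. -/
theorem stmt11 (n : ℕ) (A : Fin n → Type*)
    [∀ i, Fintype (A i)] [∀ i, Nonempty (A i)] [∀ i, LinearOrder (A i)]
    (u : ∀ i : Fin n, (∀ j, A j) → ℝ)
    (π : Equiv.Perm (∀ j, A j))
    (hπ : ∀ a b : ∀ j, A j, ∃ k : ℕ, (π ^ k) a = b)
    (g : ∀ i : Fin n, (∀ j, A j) → (∀ j, A j) → (∀ j, A j) → A i)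
    (hg1 : ∀ (i : Fin n) (a b c : ∀ j, A j), b = c → IsBR u i (c i) c →
      g i a b c = c i)
    (hg2 : ∀ (i : Fin n) (a b c : ∀ j, A j), b = c → ¬ IsBR u i (c i) c →
      IsBR u i (g i a b c) c ∧ ∀ α : A i, IsBR u i α c → g i a b c ≤ α)
    (hg3 : ∀ (i : Fin n) (a b c : ∀ j, A j), b ≠ c → a = b → g i a b c = π a i)
    (hg4 : ∀ (i : Fin n) (a b c : ∀ j, A j), b ≠ c → a ≠ b → g i a b c = c i)
    (hPNE : ∃ p : ∀ j, A j, PNE u p)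
    (x : ℕ → ∀ j, A j)
    (hx : ∀ t : ℕ, x (t + 3) = fun i => g i (x t) (x (t + 1)) (x (t + 2))) :
    ∃ (T : ℕ) (p : ∀ j, A j), PNE u p ∧ ∀ t ≥ T, x t = p :=
  stmt11_general n A u π hπ g hg1 hg2 hg3 hg4 hPNE x hx
end
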